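/- arXiv:2403.03330 — 2 statements merged into one kernel-verified Lean document; each statement's English description precedes it below -/
import Mathlib

section
/- For K = 2 and any total N, the initial assortment (n₁, n₂) with n₁ + n₂ = N that maximizes h(n₁, n₂) can be chosen with |n₁ - n₂| ≤ 1. -/
noncomputable def h2 : ℕ → ℕ → ℝ
  | _, 0 => 0
  | 0, _ => 0
  | n₁ + 1, n₂ + 1 => 1 + h2 n₁ (n₂ + 1) / 2 + h2 (n₁ + 1) n₂ / 2
termination_by n₁ n₂ => n₁ + n₂

lemma h2_nonneg : ∀ a b : ℕ, 0 ≤ h2 a b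
  | _, 0 => by simp [h2]
  | 0, _ + 1 => by simp [h2]
  | a + 1, b + 1 => by
    rw [h2]
    have h1 := h2_nonneg a (b + 1)
    have h2 := h2_nonneg (a + 1) b
    linarith
termination_by a b => a + b

lemma h2_symm : ∀ a b : ℕ, h2 a b = h2 b a
  | 0, 0 => rfl
  | 0, _ + 1 => by simp [h2]
  | _ + 1, 0 => by simp [h2]
  | a + 1, b + 1 => by
    rw [h2, h2, h2_symm a (b + 1), h2_symm (a + 1) b]
    ring
termination_by a b => a + b

lemma h2_step : ∀ a b : ℕ, a < b → h2 a b ≤ h2 (a + 1) (b - 1)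
  | 0, b, _ => by
    have : h2 0 b = 0 := by cases b <;> simp [h2]
    rw [this]; exact h2_nonneg _ _
  | a + 1, b + 1, hab => by
    rcases Nat.lt_or_ge (a + 1) b with hb | hb
    · -- b ≥ a + 2, write b = b'' + 1
      obtain ⟨b'', rfl⟩ : ∃ b'', b = b'' + 1 := ⟨b - 1, by omega⟩
      have key : h2 a (b'' + 2) ≤ h2 (a + 2) b'' := by
        calc h2 a (b'' + 2) ≤ h2 (a + 1) (b'' + 2 - 1) :=
              h2_step a (b'' + 2) (by omega)
          _ = h2 (a + 1) (b'' + 1) := by norm_num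
          _ ≤ h2 (a + 2) (b'' + 1 - 1) := h2_step (a + 1) (b'' + 1) (by omega)
          _ = h2 (a + 2) b'' := by norm_num
      have e1 : h2 (a + 1) (b'' + 1 + 1) =
          1 + h2 a (b'' + 2) / 2 + h2 (a + 1) (b'' + 1) / 2 := by rw [h2]
      have e2 : h2 (a + 1 + 1) (b'' + 1 + 1 - 1) =
          1 + h2 (a + 1) (b'' + 1) / 2 + h2 (a + 2) b'' / 2 := by
        show h2 (a + 2) (b'' + 1) = _
        rw [h2]
      rw [e1, e2]
      linarith
    · -- b = a + 1
      have : b = a + 1 := by omega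
      subst this
      simp only [Nat.add_sub_cancel]
      exact (h2_symm (a + 1) (a + 2)).le
termination_by a b => a + b

lemma h2_steps (k : ℕ) : ∀ a b : ℕ, 2 * (a + k) ≤ a + b → h2 a b ≤ h2 (a + k) (b - k) := by
  induction k with
  | zero => simp
  | succ k ih =>
    intro a b hk
    have hab : a < b := by omega
    calc h2 a b ≤ h2 (a + 1) (b - 1) := h2_step a b hab
      _ ≤ h2 (a + 1 + k) (b - 1 - k) := ih (a + 1) (b - 1) (by omega)
      _ = h2 (a + (k + 1)) (b - (k + 1)) := by congr 1 <;> omega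

theorem stmt2 (N : ℕ) :
    ∃ n₁ n₂ : ℕ, n₁ + n₂ = N ∧ |(n₁ : ℤ) - n₂| ≤ 1 ∧
      ∀ a b : ℕ, a + b = N → h2 n₁ n₂ ≥ h2 a b := by
  have key : ∀ a b : ℕ, a + b = N → a ≤ b → h2 a b ≤ h2 (N / 2) (N - N / 2) := by
    intro a b hab hle
    have h := h2_steps (N / 2 - a) a b (by omega)
    have h1 : a + (N / 2 - a) = N / 2 := by omega
    have h2' : b - (N / 2 - a) = N - N / 2 := by omega
    rwa [h1, h2'] at h
  refine ⟨N - N / 2, N / 2, by omega, ?_, ?_⟩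
  · rw [abs_le]
    constructor <;> omega
  · intro a b hab
    have hs : h2 (N / 2) (N - N / 2) = h2 (N - N / 2) (N / 2) := h2_symm _ _
    rcases le_total a b with hle | hle
    · exact hs ▸ key a b hab hle
    · calc h2 a b = h2 b a := h2_symm a b
        _ ≤ h2 (N / 2) (N - N / 2) := key b a (by omega) hle
        _ = _ := hs
end

section
/- (DTP, Dual Transfer to the Poor) For integers l ≥ m ≥ s ≥ 0 with m ≥ s + 2: h(l, m, s) ≤ h(l-1, m-1, s+2). -/
/-- Expected number of rounds until at most one of three piles remains nonempty,
where each round removes one item from a nonempty pile chosen uniformly at random. -/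
noncomputable def h3 : ℕ → ℕ → ℕ → ℝ
  | 0, 0, _ => 0
  | 0, _ + 1, 0 => 0
  | _ + 1, 0, 0 => 0
  | 0, b + 1, c + 1 => 1 + (h3 0 b (c + 1) + h3 0 (b + 1) c) / 2
  | a + 1, 0, c + 1 => 1 + (h3 a 0 (c + 1) + h3 (a + 1) 0 c) / 2
  | a + 1, b + 1, 0 => 1 + (h3 a (b + 1) 0 + h3 (a + 1) b 0) / 2
  | a + 1, b + 1, c + 1 =>
      1 + (h3 a (b + 1) (c + 1) + h3 (a + 1) b (c + 1) + h3 (a + 1) (b + 1) c) / 3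
termination_by a b c => a + b + c

lemma e1 (c : ℕ) : h3 0 0 c = 0 := by simp [h3]
lemma e2 (b : ℕ) : h3 0 (b+1) 0 = 0 := by simp [h3]
lemma e3 (a : ℕ) : h3 (a+1) 0 0 = 0 := by simp [h3]
lemma e4 (b c : ℕ) : h3 0 (b+1) (c+1) = 1 + (h3 0 b (c + 1) + h3 0 (b + 1) c) / 2 := by rw [h3]
lemma e5 (a c : ℕ) : h3 (a+1) 0 (c+1) = 1 + (h3 a 0 (c + 1) + h3 (a + 1) 0 c) / 2 := by rw [h3]
lemma e6 (a b : ℕ) : h3 (a+1) (b+1) 0 = 1 + (h3 a (b + 1) 0 + h3 (a + 1) b 0) / 2 := by rw [h3]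
lemma e7 (a b c : ℕ) : h3 (a+1) (b+1) (c+1) =
    1 + (h3 a (b + 1) (c + 1) + h3 (a + 1) b (c + 1) + h3 (a + 1) (b + 1) c) / 3 := by rw [h3]

lemma h3_nonneg : ∀ a b c : ℕ, 0 ≤ h3 a b c := by
  have key : ∀ n a b c : ℕ, a + b + c ≤ n → 0 ≤ h3 a b c := by
    intro n
    induction n with
    | zero =>
      intro a b c h
      obtain ⟨rfl,rfl,rfl⟩ : a = 0 ∧ b = 0 ∧ c = 0 := by omega
      rw [e1]
    | succ n ih =>
      intro a b c h
      match a, b, c with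
      | 0, 0, c => rw [e1]
      | 0, b+1, 0 => rw [e2]
      | a+1, 0, 0 => rw [e3]
      | 0, b+1, c+1 =>
        rw [e4]
        have h1 := ih 0 b (c+1) (by omega)
        have h2 := ih 0 (b+1) c (by omega)
        linarith
      | a+1, 0, c+1 =>
        rw [e5]
        have h1 := ih a 0 (c+1) (by omega)
        have h2 := ih (a+1) 0 c (by omega)
        linarith
      | a+1, b+1, 0 =>
        rw [e6]
        have h1 := ih a (b+1) 0 (by omega)
        have h2 := ih (a+1) b 0 (by omega)
        linarith
      | a+1, b+1, c+1 =>
        rw [e7]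
        have h1 := ih a (b+1) (c+1) (by omega)
        have h2 := ih (a+1) b (c+1) (by omega)
        have h3' := ih (a+1) (b+1) c (by omega)
        linarith
  exact fun a b c => key (a+b+c) a b c le_rfl

lemma comm12 : ∀ a b c : ℕ, h3 a b c = h3 b a c := by
  have key : ∀ n a b c : ℕ, a + b + c ≤ n → h3 a b c = h3 b a c := by
    intro n
    induction n with
    | zero =>
      intro a b c h
      obtain ⟨rfl,rfl,rfl⟩ : a = 0 ∧ b = 0 ∧ c = 0 := by omega
      rfl
    | succ n ih =>
      intro a b c h
      match a, b, c with
      | 0, 0, c => rfl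
      | 0, b+1, 0 => rw [e2, e3]
      | a+1, 0, 0 => rw [e2, e3]
      | 0, b+1, c+1 =>
        rw [e4, e5, ih 0 b (c+1) (by omega), ih 0 (b+1) c (by omega)]
      | a+1, 0, c+1 =>
        rw [e4, e5, ih a 0 (c+1) (by omega), ih (a+1) 0 c (by omega)]
      | a+1, b+1, 0 =>
        rw [e6, e6, ih a (b+1) 0 (by omega), ih (a+1) b 0 (by omega)]
        ring
      | a+1, b+1, c+1 =>
        rw [e7, e7, ih a (b+1) (c+1) (by omega), ih (a+1) b (c+1) (by omega),
          ih (a+1) (b+1) c (by omega)]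
        ring
  exact fun a b c => key (a+b+c) a b c le_rfl

lemma comm23 : ∀ a b c : ℕ, h3 a b c = h3 a c b := by
  have key : ∀ n a b c : ℕ, a + b + c ≤ n → h3 a b c = h3 a c b := by
    intro n
    induction n with
    | zero =>
      intro a b c h
      obtain ⟨rfl,rfl,rfl⟩ : a = 0 ∧ b = 0 ∧ c = 0 := by omega
      rfl
    | succ n ih =>
      intro a b c h
      match a, b, c with
      | 0, 0, 0 => rfl
      | 0, 0, c+1 => rw [e1, e2]
      | 0, b+1, 0 => rw [e1, e2]
      | a+1, 0, 0 => rfl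
      | 0, b+1, c+1 =>
        rw [e4, e4, ih 0 b (c+1) (by omega), ih 0 (b+1) c (by omega)]
        ring
      | a+1, 0, c+1 =>
        rw [e5, e6, ih a 0 (c+1) (by omega), ih (a+1) 0 c (by omega)]
      | a+1, b+1, 0 =>
        rw [e5, e6, ih a (b+1) 0 (by omega), ih (a+1) b 0 (by omega)]
      | a+1, b+1, c+1 =>
        rw [e7, e7, ih a (b+1) (c+1) (by omega), ih (a+1) b (c+1) (by omega),
          ih (a+1) (b+1) c (by omega)]
        ring
  exact fun a b c => key (a+b+c) a b c le_rfl

lemma comm13 (a b c : ℕ) : h3 a b c = h3 c b a := by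
  rw [comm23, comm12, comm23]
lemma B2 : ∀ x : ℕ, h3 x 1 0 ≤ 2 := by
  intro x
  induction x with
  | zero => rw [e2]; norm_num
  | succ x ih => rw [e6, e3]; linarith

lemma N1 : ∀ x : ℕ, 1 ≤ h3 (x+1) 1 0 := by
  intro x
  rw [e6, e3]
  have := h3_nonneg x 1 0
  linarith

lemma N2 : ∀ x : ℕ, 3/2 ≤ h3 (x+1) 2 0 := by
  intro x
  rw [e6]
  have := h3_nonneg x 2 0
  have := N1 x
  linarith

lemma N3 : ∀ x : ℕ, 5/3 ≤ h3 (x+1) 1 1 := by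
  intro x
  rw [e7]
  have h1 := h3_nonneg x 1 1
  have h2 : h3 (x+1) 0 1 = h3 (x+1) 1 0 := comm23 _ _ _
  have := N1 x
  linarith

lemma LB : ∀ x : ℕ, 2 ≤ h3 (x+1) 1 2 := by
  intro x
  rw [show (2:ℕ) = 1 + 1 from rfl, e7]
  have h1 := h3_nonneg x 1 2
  have h2 : h3 (x+1) 0 2 = h3 (x+1) 2 0 := comm23 _ _ _
  have h3' := N2 x
  have h4 := N3 x
  rw [h2]
  linarith

lemma C2a : ∀ p : ℕ, h3 p 2 0 ≤ 2 * h3 (p+1) 1 0 := by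
  intro p
  induction p with
  | zero =>
    rw [e2]
    have := h3_nonneg 1 1 0
    linarith
  | succ p ih =>
    rw [e6]
    rw [e6 (p+1) 0, e3]
    have := B2 (p+1)
    linarith

lemma C2 : ∀ p q : ℕ, h3 (p+2) q 0 + h3 p (q+2) 0 ≤ 2 * h3 (p+1) (q+1) 0 := by
  have key : ∀ n p q : ℕ, p + q ≤ n → h3 (p+2) q 0 + h3 p (q+2) 0 ≤ 2 * h3 (p+1) (q+1) 0 := by
    intro n
    induction n with
    | zero =>
      intro p q h
      obtain ⟨rfl, rfl⟩ : p = 0 ∧ q = 0 := by omega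
      rw [e3]
      have := C2a 0
      have : h3 0 2 0 = 0 := e2 1
      rw [comm12 1 1 0]
      have := C2a 0
      linarith [C2a 0, e2 1, comm12 2 0]
    | succ n ih =>
      intro p q h
      match p, q with
      | p, 0 =>
        rw [e3]
        have h1 := C2a p
        rw [comm12 (p+1) 1 0] at h1
        rw [comm12 (p+1) 1 0]
        linarith [C2a p]
      | 0, q+1 =>
        rw [e2]
        have h1 := C2a (q+1)
        rw [comm12 2 (q+1) 0, comm12 1 (q+2) 0]
        linarith
      | p+1, q+1 =>
        show h3 ((p+2)+1) (q+1) 0 + h3 (p+1) ((q+2)+1) 0 ≤ 2 * h3 ((p+1)+1) ((q+1)+1) 0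
        rw [e6 (p+2) q, e6 p (q+2), e6 (p+1) (q+1)]
        have h1 := ih (p+1) q (by omega)
        have h2 := ih p (q+1) (by omega)
        have h1' : h3 (p+1+2) q 0 + h3 (p+1) (q+2) 0 ≤ 2 * h3 (p+1+1) (q+1) 0 := h1
        have h2' : h3 (p+2) (q+1) 0 + h3 p (q+1+2) 0 ≤ 2 * h3 (p+1) (q+1+1) 0 := h2
        have r1 : h3 (p+1+2) q 0 = h3 (p+2+1) q 0 := by ring_nf
        have r2 : h3 p (q+1+2) 0 = h3 p (q+2+1) 0 := by ring_nf
        have r3 : h3 (p+1+1) (q+1) 0 = h3 (p+2) (q+1) 0 := by ring_nf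
        have r4 : h3 (p+1) (q+1+1) 0 = h3 (p+1) (q+2) 0 := by ring_nf
        rw [r1, r3, r4] at h1'
        rw [r2, r4] at h2'
        linarith
  exact fun p q => key (p+q) p q le_rfl
lemma W : ∀ x y : ℕ, h3 x (y+1) 0 + h3 (x+1) y 0 ≤ 2 * h3 x y 1 := by
  have key : ∀ n x y : ℕ, x + y ≤ n → h3 x (y+1) 0 + h3 (x+1) y 0 ≤ 2 * h3 x y 1 := by
    intro n
    induction n with
    | zero =>
      intro x y h
      obtain ⟨rfl, rfl⟩ : x = 0 ∧ y = 0 := by omega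
      rw [e2, e3]
      have := h3_nonneg 0 0 1
      linarith
    | succ n ih =>
      intro x y h
      match x, y with
      | 0, y =>
        rw [e2]
        have h1 : h3 0 y 1 = h3 1 y 0 := by rw [comm12, comm23, comm12]
        rw [h1]
        have := h3_nonneg 1 y 0
        linarith
      | x+1, 0 =>
        rw [e3]
        have h1 : h3 (x+1) 0 1 = h3 (x+1) 1 0 := comm23 _ _ _
        rw [h1]
        have := h3_nonneg (x+1) 1 0
        linarith
      | x+1, y+1 =>
        -- goal: h3 (x+1) (y+2) 0 + h3 (x+2) (y+1) 0 ≤ 2 * h3 (x+1) (y+1) 1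
        show h3 (x+1) ((y+1)+1) 0 + h3 ((x+1)+1) (y+1) 0 ≤ 2 * h3 (x+1) (y+1) 1
        rw [e6 x (y+1), e6 (x+1) y, e7 x y 0]
        have w1 : h3 x (y+1+1) 0 + h3 (x+1) (y+1) 0 ≤ 2 * h3 x (y+1) 1 := ih x (y+1) (by omega)
        have w2 : h3 (x+1) (y+1) 0 + h3 (x+1+1) y 0 ≤ 2 * h3 (x+1) y 1 := ih (x+1) y (by omega)
        have c2 : h3 (x+2) y 0 + h3 x (y+2) 0 ≤ 2 * h3 (x+1) (y+1) 0 := C2 x y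
        have r1 : h3 x (y+1+1) 0 = h3 x (y+2) 0 := by ring_nf
        have r2 : h3 (x+1+1) y 0 = h3 (x+2) y 0 := by ring_nf
        rw [r1] at w1
        rw [r2] at w2
        linarith
  exact fun x y => key (x+y) x y le_rfl
theorem bundle : ∀ n : ℕ,
    (∀ a b c : ℕ, a+b+c+1 ≤ n → c ≤ b → b ≤ a → h3 (a+1) b c ≤ h3 a (b+1) c) ∧
    (∀ a b c : ℕ, a+b+c+2 ≤ n → b ≤ a → c ≤ b+2 → h3 (a+2) b c ≤ h3 a (b+2) c) ∧
    (∀ a c : ℕ, a+c+1 ≤ n → c ≤ a → h3 (a+1) 0 c ≤ h3 a 1 c) ∧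
    (∀ a c : ℕ, a+c+2 ≤ n → c ≤ a → h3 (a+2) 0 c ≤ h3 a 1 (c+1)) ∧
    (∀ L M s : ℕ, L+M+s+2 ≤ n → s+1 ≤ M → M ≤ L → h3 (L+1) (M+1) s ≤ h3 L M (s+2)) := by
  intro n
  induction n using Nat.strong_induction_on with
  | _ n ih =>
  have Tm : ∀ a b c : ℕ, a+b+c+1 < n → c ≤ b → b ≤ a → h3 (a+1) b c ≤ h3 a (b+1) c :=
    fun a b c hr h1 h2 => (ih _ hr).1 a b c le_rfl h1 h2
  have Um : ∀ a b c : ℕ, a+b+c+2 < n → b ≤ a → c ≤ b+2 → h3 (a+2) b c ≤ h3 a (b+2) c :=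
    fun a b c hr h1 h2 => (ih _ hr).2.1 a b c le_rfl h1 h2
  have Tz : ∀ a c : ℕ, a+c+1 < n → c ≤ a → h3 (a+1) 0 c ≤ h3 a 1 c :=
    fun a c hr h1 => (ih _ hr).2.2.1 a c le_rfl h1
  have Y1 : ∀ a c : ℕ, a+c+2 < n → c ≤ a → h3 (a+2) 0 c ≤ h3 a 1 (c+1) :=
    fun a c hr h1 => (ih _ hr).2.2.2.1 a c le_rfl h1
  have Dl : ∀ L M s : ℕ, L+M+s+2 < n → s+1 ≤ M → M ≤ L → h3 (L+1) (M+1) s ≤ h3 L M (s+2) :=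
    fun L M s hr h1 h2 => (ih _ hr).2.2.2.2 L M s le_rfl h1 h2
  refine ⟨?_, ?_, ?_, ?_, ?_⟩
  -- ===================== Tm =====================
  · intro a b c hn hcb hba
    match b, c with
    | 0, c =>
      obtain rfl : c = 0 := by omega
      rw [e3]
      exact h3_nonneg _ _ _
    | b+1, 0 =>
      obtain ⟨a, rfl⟩ : ∃ t, a = t+1 := ⟨a-1, by omega⟩
      rw [e6 (a+1) b, e6 a (b+1)]
      have u1 : h3 (a+2) b 0 ≤ h3 a (b+2) 0 := Um a b 0 (by omega) (by omega) (by omega)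
      have g1 : h3 (a+1+1) b 0 = h3 (a+2) b 0 := rfl
      have g2 : h3 a (b+1+1) 0 = h3 a (b+2) 0 := rfl
      linarith
    | b+1, c+1 =>
      obtain ⟨a, rfl⟩ : ∃ t, a = t+1 := ⟨a-1, by omega⟩
      rw [e7 (a+1) b c, e7 a (b+1) c]
      have t1 : h3 (a+1+1) (b+1) c ≤ h3 (a+1) (b+1+1) c :=
        Tm (a+1) (b+1) c (by omega) (by omega) (by omega)
      have u1 : h3 (a+2) b (c+1) ≤ h3 a (b+2) (c+1) := Um a b (c+1) (by omega) (by omega) (by omega)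
      have g1 : h3 (a+1+1) b (c+1) = h3 (a+2) b (c+1) := rfl
      have g2 : h3 a (b+1+1) (c+1) = h3 a (b+2) (c+1) := rfl
      linarith
  -- ===================== Um =====================
  · intro a b c hn hba hcb
    rcases eq_or_lt_of_le hba with rfl | hlt
    · exact le_of_eq (comm12 (b+2) b c)
    · have hba1 : b+1 ≤ a := hlt
      match b, c with
      | 0, 0 =>
        rw [e3]
        exact h3_nonneg _ _ _
      | b+1, 0 =>
        obtain ⟨a, rfl⟩ : ∃ t, a = t+1 := ⟨a-1, by omega⟩
        show h3 ((a+2)+1) (b+1) 0 ≤ h3 (a+1) ((b+2)+1) 0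
        rw [e6 (a+2) b, e6 a (b+2)]
        have u1 : h3 (a+2) (b+1) 0 ≤ h3 a (b+3) 0 := Um a (b+1) 0 (by omega) (by omega) (by omega)
        have u2 : h3 (a+1+2) b 0 ≤ h3 (a+1) (b+2) 0 := Um (a+1) b 0 (by omega) (by omega) (by omega)
        have g1 : h3 (a+2+1) b 0 = h3 (a+1+2) b 0 := rfl
        have g2 : h3 a (b+2+1) 0 = h3 a (b+3) 0 := rfl
        linarith
      | 0, c+1 =>
        by_cases hsp : a = 1 ∧ c = 1
        · obtain ⟨rfl, rfl⟩ := hsp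
          norm_num [h3]
        · have hca : c+1 ≤ a := by
            rcases Nat.lt_or_ge c 1 with h1 | h1
            · omega
            · have hc1 : c = 1 := by omega
              subst hc1
              rcases Nat.lt_or_ge a 2 with h2 | h2
              · exact absurd ⟨by omega, rfl⟩ hsp
              · omega
          obtain ⟨a, rfl⟩ : ∃ t, a = t+1 := ⟨a-1, by omega⟩
          show h3 ((a+2)+1) 0 (c+1) ≤ h3 (a+1) (1+1) (c+1)
          rw [e5 (a+2) c, e7 a 1 c]
          have u1 : h3 (a+2) 0 (c+1) ≤ h3 a 2 (c+1) := Um a 0 (c+1) (by omega) (by omega) (by omega)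
          have u2 : h3 (a+1+2) 0 c ≤ h3 (a+1) 2 c := Um (a+1) 0 c (by omega) (by omega) (by omega)
          have t1 : h3 (a+1+1) 0 (c+1) ≤ h3 (a+1) 1 (c+1) := Tz (a+1) (c+1) (by omega) (by omega)
          have yq : h3 (a+2+1) 0 c ≤ h3 (a+1) 1 (c+1) := by
            have hc1 : c ≤ 1 := by omega
            interval_cases c
            · rw [e3]
              exact h3_nonneg _ _ _
            · calc h3 (a+2+1) 0 1 = h3 (a+2+1) 1 0 := comm23 _ _ _
                _ ≤ 2 := B2 _
                _ ≤ h3 (a+1) 1 2 := LB a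
          have g1 : h3 (a+1+1) 0 (c+1) = h3 (a+2) 0 (c+1) := rfl
          have g2 : h3 a (1+1) (c+1) = h3 a 2 (c+1) := rfl
          have g3 : h3 (a+1) (1+1) c = h3 (a+1) 2 c := rfl
          have g4 : h3 (a+1+2) 0 c = h3 (a+2+1) 0 c := rfl
          linarith
      | b+1, c+1 =>
        obtain ⟨a, rfl⟩ : ∃ t, a = t+1 := ⟨a-1, by omega⟩
        show h3 ((a+2)+1) (b+1) (c+1) ≤ h3 (a+1) ((b+2)+1) (c+1)
        rw [e7 (a+2) b c, e7 a (b+2) c]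
        have p1 : h3 (a+2) (b+1) (c+1) ≤ h3 a (b+3) (c+1) :=
          Um a (b+1) (c+1) (by omega) (by omega) (by omega)
        have p3 : h3 (a+1+2) (b+1) c ≤ h3 (a+1) (b+3) c :=
          Um (a+1) (b+1) c (by omega) (by omega) (by omega)
        have p2 : h3 (a+2+1) b (c+1) ≤ h3 (a+1) (b+2) (c+1) := by
          rcases Nat.lt_or_ge c (b+2) with hc | hc
          · have u3 : h3 (a+1+2) b (c+1) ≤ h3 (a+1) (b+2) (c+1) :=
              Um (a+1) b (c+1) (by omega) (by omega) (by omega)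
            exact u3
          · have hcb2 : c = b+2 := by omega
            subst hcb2
            have s1 : h3 (a+2+1) b (b+2+1) = h3 (a+2+1) (b+2+1) b := comm23 _ _ _
            have s2 : h3 ((a+2)+1) ((b+2)+1) b ≤ h3 (a+2) (b+2) (b+2) :=
              Dl (a+2) (b+2) b (by omega) (by omega) (by omega)
            have s3 : h3 ((a+1)+1) (b+2) (b+2) ≤ h3 (a+1) ((b+2)+1) (b+2) :=
              Tm (a+1) (b+2) (b+2) (by omega) (by omega) (by omega)
            have s4 : h3 (a+1) (b+2+1) (b+2) = h3 (a+1) (b+2) (b+2+1) := comm23 _ _ _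
            have g5 : h3 ((a+1)+1) (b+2) (b+2) = h3 (a+2) (b+2) (b+2) := rfl
            linarith
        have g1 : h3 a (b+2+1) (c+1) = h3 a (b+3) (c+1) := rfl
        have g2 : h3 (a+2+1) (b+1) c = h3 (a+1+2) (b+1) c := rfl
        have g3 : h3 (a+1) (b+2+1) c = h3 (a+1) (b+3) c := rfl
        linarith
  -- ===================== Tz =====================
  · intro a c hn hca
    match c with
    | 0 =>
      rw [e3]
      exact h3_nonneg _ _ _
    | c+1 =>
      obtain ⟨a, rfl⟩ : ∃ t, a = t+1 := ⟨a-1, by omega⟩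
      rw [e5 (a+1) c, e7 a 0 c]
      have w1 := W (a+1) c
      have y1 : h3 (a+2) 0 c ≤ h3 a 1 (c+1) := Y1 a c (by omega) (by omega)
      have s1 : h3 (a+1) (c+1) 0 = h3 (a+1) 0 (c+1) := comm23 _ _ _
      have s2 : h3 (a+1+1) c 0 = h3 (a+1+1) 0 c := comm23 _ _ _
      have s3 : h3 (a+1) c 1 = h3 (a+1) 1 c := comm23 _ _ _
      have g1 : h3 (a+1+1) 0 c = h3 (a+2) 0 c := rfl
      have g2 : h3 a (0+1) (c+1) = h3 a 1 (c+1) := rfl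
      have g3 : h3 (a+1) (0+1) c = h3 (a+1) 1 c := rfl
      linarith
  -- ===================== Y1 =====================
  · intro a c hn hca
    match c with
    | 0 =>
      show h3 ((a+1)+1) 0 0 ≤ h3 a 1 1
      rw [e3]
      exact h3_nonneg _ _ _
    | c+1 =>
      obtain ⟨a, rfl⟩ : ∃ t, a = t+1 := ⟨a-1, by omega⟩
      show h3 ((a+2)+1) 0 (c+1) ≤ h3 (a+1) (0+1) ((c+1)+1)
      rw [e5 (a+2) c, e7 a 0 (c+1)]
      -- p = h3 (a+2) 0 (c+1), q = h3 (a+2+1) 0 c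
      -- Q1 = h3 a (0+1) (c+1+1), Q2 = h3 (a+1) 0 (c+1+1), Q3 = h3 (a+1) (0+1) (c+1)
      have hA : h3 (a+2) 0 (c+1) ≤ h3 (a+1) 0 (c+2) := by
        have t1 : h3 ((a+1)+1) (c+1) 0 ≤ h3 (a+1) ((c+1)+1) 0 :=
          Tm (a+1) (c+1) 0 (by omega) (by omega) (by omega)
        have s1 : h3 (a+2) (c+1) 0 = h3 (a+2) 0 (c+1) := comm23 _ _ _
        have s2 : h3 (a+1) (c+2) 0 = h3 (a+1) 0 (c+2) := comm23 _ _ _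
        have g : h3 ((a+1)+1) (c+1) 0 = h3 (a+2) (c+1) 0 := rfl
        linarith
      have hB : h3 (a+2+1) 0 c ≤ h3 (a+1) 0 (c+2) := by
        have u1 : h3 ((a+1)+2) c 0 ≤ h3 (a+1) (c+2) 0 :=
          Um (a+1) c 0 (by omega) (by omega) (by omega)
        have s1 : h3 (a+1+2) c 0 = h3 (a+1+2) 0 c := comm23 _ _ _
        have s2 : h3 (a+1) (c+2) 0 = h3 (a+1) 0 (c+2) := comm23 _ _ _
        have g : h3 (a+1+2) 0 c = h3 (a+2+1) 0 c := rfl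
        linarith
      have hC : h3 (a+2+1) 0 c ≤ h3 (a+1) 1 (c+1) := by
        have := Y1 (a+1) c (by omega) (by omega)
        have g : h3 (a+1+2) 0 c = h3 (a+2+1) 0 c := rfl
        linarith
      have hE : h3 (a+2) 0 (c+1) ≤ h3 (a+1) 1 (c+1) := by
        have := Tz (a+1) (c+1) (by omega) (by omega)
        have g : h3 (a+1+1) 0 (c+1) = h3 (a+2) 0 (c+1) := rfl
        linarith
      have g1 : h3 a (0+1) (c+1+1) = h3 a 1 (c+2) := rfl
      have g2 : h3 (a+1) 0 (c+1+1) = h3 (a+1) 0 (c+2) := rfl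
      have g3 : h3 (a+1) (0+1) (c+1) = h3 (a+1) 1 (c+1) := rfl
      rcases Nat.lt_or_ge (c+1) (a+1) with hlt | hge
      · -- c+1 ≤ a : use Y1 (a, c+1) for p ≤ Q1
        have hD1 : h3 (a+2) 0 (c+1) ≤ h3 a 1 (c+2) := by
          have := Y1 a (c+1) (by omega) (by omega)
          have g : h3 a 1 (c+1+1) = h3 a 1 (c+2) := rfl
          linarith
        linarith
      · -- c = a : q ≤ Q1 via Tz and comm13
        have hceq : c = a := by omega
        subst hceq
        have hD2 : h3 (c+2+1) 0 c ≤ h3 c 1 (c+2) := by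
          have t1 : h3 ((c+2)+1) 0 c ≤ h3 (c+2) 1 c := Tz (c+2) c (by omega) (by omega)
          have s1 : h3 (c+2) 1 c = h3 c 1 (c+2) := comm13 _ _ _
          linarith
        linarith
  -- ===================== D =====================
  · intro L M s hn hsM hML
    match s with
    | 0 =>
      obtain ⟨M, rfl⟩ : ∃ t, M = t+1 := ⟨M-1, by omega⟩
      obtain ⟨L, rfl⟩ : ∃ t, L = t+1 := ⟨L-1, by omega⟩
      show h3 ((L+1)+1) ((M+1)+1) 0 ≤ h3 (L+1) (M+1) (1+1)
      rw [e6 (L+1) (M+1), e7 L M 1]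
      have hAA : h3 (L+1) (M+1+1) 0 ≤ h3 L (M+1) (1+1) := by
        rcases Nat.lt_or_ge (M+1) (L+1) with hlt | hge
        · have d1 : h3 (L+1) ((M+1)+1) 0 ≤ h3 L (M+1) (0+2) :=
            Dl L (M+1) 0 (by omega) (by omega) (by omega)
          exact d1
        · have hLM : L = M := by omega
          subst hLM
          rcases Nat.eq_zero_or_pos L with rfl | hM1
          · have c1 : h3 1 (0+1+1) 0 = h3 (0+1+1) 1 0 := comm12 _ _ _
            have c2 : h3 0 (0+1) (1+1) = h3 (1+1) (0+1) 0 := comm13 _ _ _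
            have c3 : h3 (0+1+1) 1 0 = h3 (1+1) (0+1) 0 := rfl
            linarith
          · have d1 : h3 ((L+1)+1) (L+1) 0 ≤ h3 (L+1) L (0+2) :=
              Dl (L+1) L 0 (by omega) (by omega) (by omega)
            have c1 : h3 (L+1) (L+1+1) 0 = h3 (L+1+1) (L+1) 0 := comm12 _ _ _
            have c3 : h3 (L+1) L (0+2) = h3 L (L+1) (1+1) := by
              rw [show (0:ℕ)+2 = 1+1 from rfl]
              exact comm12 _ _ _
            have g : h3 ((L+1)+1) (L+1) 0 = h3 (L+1+1) (L+1) 0 := rfl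
            linarith
      have hBB : h3 (L+1+1) (M+1) 0 ≤ h3 (L+1) M (1+1) := by
        rcases Nat.eq_zero_or_pos M with rfl | hM1
        · have t1 : h3 ((L+1)+1) 1 0 ≤ h3 (L+1) (1+1) 0 :=
            Tm (L+1) 1 0 (by omega) (by omega) (by omega)
          have c1 : h3 (L+1) 0 (1+1) = h3 (L+1) (1+1) 0 := comm23 _ _ _
          have g : h3 ((L+1)+1) 1 0 = h3 (L+1+1) (0+1) 0 := rfl
          linarith
        · obtain ⟨M, rfl⟩ : ∃ t, M = t+1 := ⟨M-1, by omega⟩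
          have d1 : h3 ((L+1)+1) ((M+1)+1) 0 ≤ h3 (L+1) (M+1) (0+2) :=
            Dl (L+1) (M+1) 0 (by omega) (by omega) (by omega)
          exact d1
      have hBC : h3 (L+1+1) (M+1) 0 ≤ h3 (L+1) (M+1) 1 := by
        have t1 : h3 ((L+1)+1) 0 (M+1) ≤ h3 (L+1) 1 (M+1) :=
          Tz (L+1) (M+1) (by omega) (by omega)
        have c1 : h3 (L+1+1) (M+1) 0 = h3 (L+1+1) 0 (M+1) := comm23 _ _ _
        have c2 : h3 (L+1) 1 (M+1) = h3 (L+1) (M+1) 1 := comm23 _ _ _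
        linarith
      have hW : h3 (L+1) (M+1+1) 0 + h3 (L+1+1) (M+1) 0 ≤ 2 * h3 (L+1) (M+1) 1 := by
        have w := W (L+1) (M+1)
        have g : h3 ((L+1)+1) (M+1) 0 = h3 (L+1+1) (M+1) 0 := rfl
        linarith
      linarith
    | s+1 =>
      obtain ⟨M, rfl⟩ : ∃ t, M = t+1 := ⟨M-1, by omega⟩
      obtain ⟨L, rfl⟩ : ∃ t, L = t+1 := ⟨L-1, by omega⟩
      show h3 ((L+1)+1) ((M+1)+1) (s+1) ≤ h3 (L+1) (M+1) ((s+2)+1)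
      rw [e7 (L+1) (M+1) s, e7 L M (s+2)]
      have hCC : h3 (L+1+1) (M+1+1) s ≤ h3 (L+1) (M+1) (s+2) := by
        have d1 : h3 ((L+1)+1) ((M+1)+1) s ≤ h3 (L+1) (M+1) (s+2) :=
          Dl (L+1) (M+1) s (by omega) (by omega) (by omega)
        exact d1
      have hAA : h3 (L+1) (M+1+1) (s+1) ≤ h3 L (M+1) (s+2+1) := by
        rcases Nat.lt_or_ge (M+1) (L+1) with hlt | hge
        · have d1 : h3 (L+1) ((M+1)+1) (s+1) ≤ h3 L (M+1) ((s+1)+2) :=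
            Dl L (M+1) (s+1) (by omega) (by omega) (by omega)
          have g : h3 L (M+1) ((s+1)+2) = h3 L (M+1) (s+2+1) := rfl
          linarith
        · have hLM : L = M := by omega
          subst hLM
          rcases Nat.lt_or_ge (s+2) (L+1) with h1 | h1
          · -- s+2 ≤ L
            have d1 : h3 ((L+1)+1) (L+1) (s+1) ≤ h3 (L+1) L ((s+1)+2) :=
              Dl (L+1) L (s+1) (by omega) (by omega) (by omega)
            have c1 : h3 (L+1) (L+1+1) (s+1) = h3 (L+1+1) (L+1) (s+1) := comm12 _ _ _
            have c3 : h3 (L+1) L ((s+1)+2) = h3 L (L+1) (s+2+1) := by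
              rw [show (s+1)+2 = (s+2)+1 from rfl]
              exact comm12 _ _ _
            have g : h3 ((L+1)+1) (L+1) (s+1) = h3 (L+1+1) (L+1) (s+1) := rfl
            linarith
          · -- L = s+1 : equality by symmetry
            have hM : L = s+1 := by omega
            subst hM
            have c1 : h3 (s+1+1) (s+1+1+1) (s+1) = h3 (s+1+1+1) (s+1+1) (s+1) := comm12 _ _ _
            have c2 : h3 (s+1) (s+1+1) (s+2+1) = h3 (s+1+1+1) (s+1+1) (s+1) := by
              rw [show s+2+1 = s+1+1+1 from rfl]
              exact comm13 _ _ _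
            linarith
      have hBB : h3 (L+1+1) (M+1) (s+1) ≤ h3 (L+1) M (s+2+1) := by
        rcases Nat.lt_or_ge (s+2) (M+1) with h1 | h1
        · -- s+2 ≤ M
          have d1 : h3 ((L+1)+1) (M+1) (s+1) ≤ h3 (L+1) M ((s+1)+2) :=
            Dl (L+1) M (s+1) (by omega) (by omega) (by omega)
          have g : h3 (L+1) M ((s+1)+2) = h3 (L+1) M (s+2+1) := rfl
          linarith
        · -- M = s+1
          have hM : M = s+1 := by omega
          subst hM
          have t1 : h3 ((L+1)+1) (s+2) (s+1) ≤ h3 (L+1) ((s+2)+1) (s+1) :=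
            Tm (L+1) (s+2) (s+1) (by omega) (by omega) (by omega)
          have c1 : h3 (L+1) (s+2+1) (s+1) = h3 (L+1) (s+1) (s+2+1) := by
            exact comm23 _ _ _
          have g1 : h3 ((L+1)+1) (s+2) (s+1) = h3 (L+1+1) (s+1+1) (s+1) := rfl
          linarith
      linarith
theorem stmt5 (l m s : ℕ) (hlm : m ≤ l) (hms : s ≤ m) (h2 : s + 2 ≤ m) :
    h3 l m s ≤ h3 (l - 1) (m - 1) (s + 2) := by
  obtain ⟨M, rfl⟩ : ∃ t, m = t+1 := ⟨m-1, by omega⟩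
  obtain ⟨L, rfl⟩ : ∃ t, l = t+1 := ⟨l-1, by omega⟩
  have := (bundle (L+M+s+2)).2.2.2.2 L M s le_rfl (by omega) (by omega)
  simpa using this
end
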